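/- Let z₁ ∈ (π, 3π/2) and z₃ ∈ (3π, 7π/2) be solutions of tan z = z/3. Then -sin(z₁)/z₁³ > -sin(z₃)/z₃³ > 0; hence the corresponding curves satisfy μ₁(N) > μ₃(N) for all N > 0, where μ_j(N) = -N sin(z_j)/z_j³. -/
import Mathlib


open Real

/-- Monotonicity of the instability-boundary curves: for the odd solutions
z₁ ∈ (π, 3π/2) and z₃ ∈ (3π, 7π/2) of tan z = z/3 one has
-sin z₁/z₁³ > -sin z₃/z₃³ > 0, hence μ₁(N) > μ₃(N) for all N > 0. -/
theorem instability_curves_ordered (z₁ z₃ : ℝ)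
    (h₁ : z₁ ∈ Set.Ioo π (3 * π / 2)) (ht₁ : Real.tan z₁ = z₁ / 3)
    (h₃ : z₃ ∈ Set.Ioo (3 * π) (7 * π / 2)) (ht₃ : Real.tan z₃ = z₃ / 3) :
    -Real.sin z₁ / z₁ ^ 3 > -Real.sin z₃ / z₃ ^ 3 ∧
    -Real.sin z₃ / z₃ ^ 3 > 0 ∧
    ∀ N : ℝ, 0 < N → -N * Real.sin z₁ / z₁ ^ 3 > -N * Real.sin z₃ / z₃ ^ 3 := by
  obtain ⟨hz1l, hz1u⟩ := h₁
  obtain ⟨hz3l, hz3u⟩ := h₃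
  have hπ : (3:ℝ) < π := Real.pi_gt_three
  have hπ0 : (0:ℝ) < π := by linarith
  have hz1pos : 0 < z₁ := by linarith
  have hz3pos : 0 < z₃ := by linarith
  -- sin z₁ < 0
  have hs1neg : Real.sin z₁ < 0 := by
    have h := Real.sin_pos_of_pos_of_lt_pi (x := z₁ - π) (by linarith) (by linarith)
    rw [Real.sin_sub_pi] at h
    linarith
  -- sin z₃ < 0
  have hs3neg : Real.sin z₃ < 0 := by
    have h := Real.sin_pos_of_pos_of_lt_pi (x := z₃ - 3 * π) (by linarith) (by linarith)
    have e : z₃ - 3 * π = (z₃ - π) - 2 * π := by ring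
    rw [e, Real.sin_sub_two_pi, Real.sin_sub_pi] at h
    linarith
  -- cos z₁ < 0
  have hc1neg : Real.cos z₁ < 0 := by
    have h := Real.cos_pos_of_mem_Ioo (x := z₁ - π)
      ⟨by linarith, by linarith⟩
    rw [Real.cos_sub_pi] at h
    linarith
  -- from tan equation: 3 * sin z₁ = z₁ * cos z₁
  have key : 3 * Real.sin z₁ = z₁ * Real.cos z₁ := by
    have hc : Real.cos z₁ ≠ 0 := ne_of_lt hc1neg
    have := ht₁
    rw [Real.tan_eq_sin_div_cos, div_eq_div_iff hc (by norm_num)] at this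
    linarith
  have hpyth : Real.sin z₁ ^ 2 + Real.cos z₁ ^ 2 = 1 := Real.sin_sq_add_cos_sq z₁
  -- sin² z₁ * (9 + z₁²) = z₁²
  have hsq : Real.sin z₁ ^ 2 * (9 + z₁ ^ 2) = z₁ ^ 2 := by nlinarith [key, hpyth]
  -- -sin z₁ > 1/2
  have hs1big : -Real.sin z₁ > 1 / 2 := by
    nlinarith [sq_nonneg (Real.sin z₁ + 1/2), hz1pos, hπ]
  have hs3le : -Real.sin z₃ ≤ 1 := by
    have := Real.neg_one_le_sin z₃
    linarith
  -- main inequality of numerators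
  have hmain : -Real.sin z₁ * z₃ ^ 3 > -Real.sin z₃ * z₁ ^ 3 := by
    have h1 : -Real.sin z₃ * z₁ ^ 3 ≤ z₁ ^ 3 := by
      nlinarith [pow_pos hz1pos 3]
    have h2 : z₁ ^ 3 < (3 * π / 2) ^ 3 := by
      gcongr <;> linarith
    have h3 : (1/2 : ℝ) * (3 * π) ^ 3 < -Real.sin z₁ * z₃ ^ 3 := by
      have : (3 * π) ^ 3 < z₃ ^ 3 := by gcongr <;> linarith
      have hpz : (0:ℝ) < z₃ ^ 3 - (3 * π) ^ 3 := by linarith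
      nlinarith [mul_pos (show (0:ℝ) < -Real.sin z₁ - 1/2 by linarith) (pow_pos hz3pos 3),
        mul_pos (show (0:ℝ) < -Real.sin z₁ by linarith) hpz, pow_pos hπ0 3]
    nlinarith [h1, h2, h3, pow_pos hπ0 3]
  have hz1c : 0 < z₁ ^ 3 := pow_pos hz1pos 3
  have hz3c : 0 < z₃ ^ 3 := pow_pos hz3pos 3
  have hA : -Real.sin z₁ / z₁ ^ 3 > -Real.sin z₃ / z₃ ^ 3 := by
    rw [gt_iff_lt, div_lt_div_iff₀ hz3c hz1c]
    nlinarith [hmain]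
  have hB : -Real.sin z₃ / z₃ ^ 3 > 0 := div_pos (by linarith) hz3c
  refine ⟨hA, hB, fun N hN => ?_⟩
  have e1 : -N * Real.sin z₁ / z₁ ^ 3 = N * (-Real.sin z₁ / z₁ ^ 3) := by ring
  have e3 : -N * Real.sin z₃ / z₃ ^ 3 = N * (-Real.sin z₃ / z₃ ^ 3) := by ring
  rw [e1, e3]
  exact mul_lt_mul_of_pos_left hA hN
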